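/- Let A, G be symmetric positive definite n×n matrices such that (1/ξ)·A ⪯ G for some ξ > 0. Then, for any τ ∈ [0,1], any nonzero u ∈ ℝ^n, and G₊ := Broyd_τ(A, G, u), one has ν(A,G,u)² ≥ (1/(1+ξ))·⟨(G−A)G₊⁻¹(G−A)u, u⟩/⟨Gu, u⟩. -/

import Mathlib

open Matrix Finset

/-- The Broyden family update of a Hessian approximation `G` with respect to
the target matrix `A` along direction `u`, parameterized by `τ`. -/
noncomputable def broyd {n : ℕ} (τ : ℝ) (A G : Matrix (Fin n) (Fin n) ℝ) (u : Fin n → ℝ) :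
    Matrix (Fin n) (Fin n) ℝ :=
  if u = 0 then G
  else
    let aUU : ℝ := u ⬝ᵥ A.mulVec u
    let gUU : ℝ := u ⬝ᵥ G.mulVec u
    let agaUU : ℝ := u ⬝ᵥ (A * G⁻¹ * A).mulVec u
    let ρ : ℝ := gUU / aUU
    let φ : ℝ := τ * (aUU / agaUU) / (τ * (aUU / agaUU) + (1 - τ) * ρ)
    φ • (G - aUU⁻¹ • (A * vecMulVec u u * G + G * vecMulVec u u * A)
          + ((ρ + 1) / aUU) • (A * vecMulVec u u * A)) +
    (1 - φ) • (G - gUU⁻¹ • (G * vecMulVec u u * G) + aUU⁻¹ • (A * vecMulVec u u * A))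

/-- `psdLE P Q` (i.e. `P ⪯ Q`) : the matrix `Q - P` is positive semidefinite. -/
def psdLE {n : ℕ} (P Q : Matrix (Fin n) (Fin n) ℝ) : Prop := (Q - P).PosSemidef

/-- The closeness measure ν(A, G, u). -/
noncomputable def nuMeas {n : ℕ} (A G : Matrix (Fin n) (Fin n) ℝ) (u : Fin n → ℝ) : ℝ :=
  Real.sqrt ((u ⬝ᵥ ((G - A) * G⁻¹ * (G - A)).mulVec u) / (u ⬝ᵥ A.mulVec u))

/-- The log-det barrier V(A, G) = ln det (A⁻¹ G). -/
noncomputable def logDetBarrier {n : ℕ} (A G : Matrix (Fin n) (Fin n) ℝ) : ℝ :=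
  Real.log (A⁻¹ * G).det

/-- The augmented log-det barrier ψ(G, A) = ln det (A⁻¹ G) - tr (G⁻¹ (G - A)). -/
noncomputable def psiBarrier {n : ℕ} (G A : Matrix (Fin n) (Fin n) ℝ) : ℝ :=
  Real.log (A⁻¹ * G).det - (G⁻¹ * (G - A)).trace

/-!
Write `a = ⟨Au, u⟩`, `g = ⟨Gu, u⟩`, `q = ⟨AG⁻¹Au, u⟩` and `v = (G - A)u`, so that
`ν² = ⟨G⁻¹v, v⟩ / a = (q - 2a + g) / a`. The update `G₊` is a convex combination of the DFP and
BFGS updates, both positive semidefinite, and `M ↦ ⟨M⁻¹v, v⟩` is convex on positive definite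
matrices, being the supremum of the affine maps `M ↦ 2⟨x, v⟩ - ⟨Mx, x⟩`. For DFP and BFGS, `M⁻¹v`
is an explicit combination of `u` and `G⁻¹Au`, so `⟨G₊⁻¹v, v⟩` is at most a convex combination of
two rational functions of `a, g, q`. The hypothesis `A / ξ ⪯ G` gives `a ≤ ξ g` and `q ≤ ξ a`,
Cauchy–Schwarz gives `a² ≤ q g`, and under these constraints both functions are at most
`(1 + ξ) g (q - 2a + g) / a`.
-/

theorem Matrix.conjTranspose_one_sub_smul_vecMulVec {ι : Type*} [DecidableEq ι] (c : ℝ) (x w : ι → ℝ) :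
    (1 - c • vecMulVec x w)ᴴ = 1 - c • vecMulVec w x := by
  rw [conjTranspose_sub, conjTranspose_one, conjTranspose_smul, conjTranspose_vecMulVec,
    star_trivial, star_trivial, star_trivial]

section QuadraticForms

variable {ι : Type*} [Fintype ι]

theorem Matrix.IsSymm.dotProduct_mulVec_comm {M : Matrix ι ι ℝ} (hM : M.IsSymm) (x y : ι → ℝ) :
    x ⬝ᵥ M *ᵥ y = y ⬝ᵥ M *ᵥ x := by
  rw [dotProduct_mulVec, ← mulVec_transpose, hM.eq, dotProduct_comm]

theorem Matrix.IsSymm.dotProduct_mul_mul_mulVec {S : Matrix ι ι ℝ} (hS : S.IsSymm)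
    (N : Matrix ι ι ℝ) (u : ι → ℝ) : u ⬝ᵥ (S * N * S) *ᵥ u = (S *ᵥ u) ⬝ᵥ N *ᵥ (S *ᵥ u) := by
  rw [← mulVec_mulVec, ← mulVec_mulVec, hS.dotProduct_mulVec_comm, dotProduct_comm]

theorem Matrix.mul_vecMulVec_mul_of_isSymm (M : Matrix ι ι ℝ) {N : Matrix ι ι ℝ} (hN : N.IsSymm)
    (x w : ι → ℝ) : M * vecMulVec x w * N = vecMulVec (M *ᵥ x) (N *ᵥ w) := by
  rw [mul_vecMulVec, vecMulVec_mul, ← mulVec_transpose, hN.eq]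

theorem Matrix.vecMulVec_mulVec' (x w v : ι → ℝ) : vecMulVec x w *ᵥ v = (w ⬝ᵥ v) • x := by
  rw [vecMulVec_mulVec, op_smul_eq_smul]

theorem dotProduct_mulVec_le_of_posSemidef_sub {A G : Matrix ι ι ℝ} (h : (G - A).PosSemidef)
    (x : ι → ℝ) : x ⬝ᵥ A *ᵥ x ≤ x ⬝ᵥ G *ᵥ x := by
  have := h.dotProduct_mulVec_nonneg x
  rwa [star_trivial, sub_mulVec, dotProduct_sub, sub_nonneg] at this

theorem Matrix.PosSemidef.two_mul_dotProduct_sub_le {M : Matrix ι ι ℝ} (hM : M.PosSemidef)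
    {w v : ι → ℝ} (hw : M *ᵥ w = v) (x : ι → ℝ) :
    2 * (x ⬝ᵥ v) - x ⬝ᵥ M *ᵥ x ≤ w ⬝ᵥ v := by
  have hsymm := (isHermitian_iff_isSymm.mp hM.1).dotProduct_mulVec_comm x w
  have h := hM.dotProduct_mulVec_nonneg (x - w)
  rw [star_trivial, mulVec_sub, sub_dotProduct, dotProduct_sub, dotProduct_sub, hw] at h
  rw [hw] at hsymm
  linarith

variable [DecidableEq ι]

theorem Matrix.PosDef.mulVec_inv_mulVec {G : Matrix ι ι ℝ} (hG : G.PosDef) (x : ι → ℝ) :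
    G *ᵥ (G⁻¹ *ᵥ x) = x := by
  rw [mulVec_mulVec, mul_nonsing_inv _ hG.det_pos.ne'.isUnit, one_mulVec]

theorem Matrix.PosDef.inv_mulVec_mulVec {G : Matrix ι ι ℝ} (hG : G.PosDef) (x : ι → ℝ) :
    G⁻¹ *ᵥ (G *ᵥ x) = x := by
  rw [mulVec_mulVec, nonsing_inv_mul _ hG.det_pos.ne'.isUnit, one_mulVec]

theorem Matrix.PosDef.mulVec_dotProduct_inv_mulVec {G : Matrix ι ι ℝ} (hG : G.PosDef)
    (u x : ι → ℝ) : (G *ᵥ u) ⬝ᵥ (G⁻¹ *ᵥ x) = u ⬝ᵥ x := by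
  rw [dotProduct_comm, (isHermitian_iff_isSymm.mp hG.1).dotProduct_mulVec_comm,
    hG.mulVec_inv_mulVec]

theorem Matrix.PosSemidef.dotProduct_inv_mulVec_le_of_mulVec_eq {A G : Matrix ι ι ℝ}
    (hA : A.PosSemidef) (hAG : (G - A).PosSemidef) (hG : G.PosDef) {w y : ι → ℝ}
    (hw : A *ᵥ w = y) : y ⬝ᵥ G⁻¹ *ᵥ y ≤ w ⬝ᵥ y := by
  have hAx := dotProduct_mulVec_le_of_posSemidef_sub hAG (G⁻¹ *ᵥ y)
  rw [hG.mulVec_inv_mulVec] at hAx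
  linarith [hA.two_mul_dotProduct_sub_le hw (G⁻¹ *ᵥ y), dotProduct_comm (G⁻¹ *ᵥ y) y]

theorem Matrix.PosDef.sq_dotProduct_le {G : Matrix ι ι ℝ} (hG : G.PosDef) (u y : ι → ℝ) :
    (u ⬝ᵥ y) ^ 2 ≤ y ⬝ᵥ G⁻¹ *ᵥ y * (u ⬝ᵥ G *ᵥ u) := by
  rcases eq_or_ne u 0 with rfl | hu
  · simp
  have hg : 0 < u ⬝ᵥ G *ᵥ u := by simpa using hG.dotProduct_mulVec_pos hu
  have h := hG.posSemidef.two_mul_dotProduct_sub_le (hG.mulVec_inv_mulVec y)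
    (((u ⬝ᵥ y) / (u ⬝ᵥ G *ᵥ u)) • u)
  simp only [smul_dotProduct, mulVec_smul, dotProduct_smul, smul_eq_mul,
    dotProduct_comm (G⁻¹ *ᵥ y) y] at h
  have key : (u ⬝ᵥ y) ^ 2 / (u ⬝ᵥ G *ᵥ u) ≤ y ⬝ᵥ G⁻¹ *ᵥ y := by
    convert h using 1; field_simp; ring
  rwa [div_le_iff₀ hg] at key

/-- When `φ • D + (1 - φ) • B` is singular, its inverse is the junk value `0` and the bound
still holds. -/
theorem Matrix.dotProduct_inv_mulVec_convexComb_le {D B : Matrix ι ι ℝ} (hD : D.PosSemidef)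
    (hB : B.PosSemidef) {φ : ℝ} (hφ : φ ∈ Set.Icc (0 : ℝ) 1) {v wD wB : ι → ℝ}
    (hwD : D *ᵥ wD = v) (hwB : B *ᵥ wB = v) :
    v ⬝ᵥ (φ • D + (1 - φ) • B)⁻¹ *ᵥ v ≤ φ * (wD ⬝ᵥ v) + (1 - φ) * (wB ⬝ᵥ v) := by
  obtain ⟨hφ0, hφ1⟩ := hφ
  have hD' := hD.two_mul_dotProduct_sub_le hwD
  have hB' := hB.two_mul_dotProduct_sub_le hwB
  by_cases hM : IsUnit (φ • D + (1 - φ) • B).det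
  · set x := (φ • D + (1 - φ) • B)⁻¹ *ᵥ v
    have hMx : (φ • D + (1 - φ) • B) *ᵥ x = v := by
      rw [mulVec_mulVec, mul_nonsing_inv _ hM, one_mulVec]
    rw [dotProduct_comm]
    have hx : x ⬝ᵥ v = φ * (x ⬝ᵥ D *ᵥ x) + (1 - φ) * (x ⬝ᵥ B *ᵥ x) := by
      rw [← hMx, add_mulVec, smul_mulVec, smul_mulVec, dotProduct_add, dotProduct_smul,
        dotProduct_smul, smul_eq_mul, smul_eq_mul]
    linarith [mul_le_mul_of_nonneg_left (hD' x) hφ0,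
      mul_le_mul_of_nonneg_left (hB' x) (sub_nonneg.mpr hφ1)]
  · rw [nonsing_inv_apply_not_isUnit _ hM, zero_mulVec, dotProduct_zero]
    have hD0 : 0 ≤ wD ⬝ᵥ v := by simpa using hD' 0
    have hB0 : 0 ≤ wB ⬝ᵥ v := by simpa using hB' 0
    exact add_nonneg (mul_nonneg hφ0 hD0) (mul_nonneg (sub_nonneg.mpr hφ1) hB0)

theorem dotProduct_mul_inv_mul_mulVec_le {A G : Matrix ι ι ℝ} (hA : A.PosSemidef)
    (hG : G.PosDef) {ξ : ℝ} (hξ : 0 < ξ) (h : (G - ξ⁻¹ • A).PosSemidef) (u : ι → ℝ) :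
    u ⬝ᵥ (A * G⁻¹ * A) *ᵥ u ≤ ξ * (u ⬝ᵥ A *ᵥ u) := by
  have hw : (ξ⁻¹ • A) *ᵥ (ξ • u) = A *ᵥ u := by
    rw [smul_mulVec, mulVec_smul, smul_smul, inv_mul_cancel₀ hξ.ne', one_smul]
  have := (hA.smul (inv_nonneg.mpr hξ.le)).dotProduct_inv_mulVec_le_of_mulVec_eq h hG hw
  rwa [← (isHermitian_iff_isSymm.mp hA.1).dotProduct_mul_mul_mulVec, smul_dotProduct,
    smul_eq_mul] at this

end QuadraticForms

section BroydenFamily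

variable {ι : Type*} [Fintype ι]

noncomputable def dfpUpdate (A G : Matrix ι ι ℝ) (u : ι → ℝ) : Matrix ι ι ℝ :=
  G - (u ⬝ᵥ A *ᵥ u)⁻¹ • (A * vecMulVec u u * G + G * vecMulVec u u * A)
    + (((u ⬝ᵥ G *ᵥ u) / (u ⬝ᵥ A *ᵥ u) + 1) / (u ⬝ᵥ A *ᵥ u)) • (A * vecMulVec u u * A)

noncomputable def bfgsUpdate (A G : Matrix ι ι ℝ) (u : ι → ℝ) : Matrix ι ι ℝ :=
  G - (u ⬝ᵥ G *ᵥ u)⁻¹ • (G * vecMulVec u u * G) + (u ⬝ᵥ A *ᵥ u)⁻¹ • (A * vecMulVec u u * A)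

variable {A G : Matrix ι ι ℝ} {u : ι → ℝ}

theorem dfpUpdate_eq_vecMulVec (hA : A.IsSymm) (hG : G.IsSymm) :
    dfpUpdate A G u = G - (u ⬝ᵥ A *ᵥ u)⁻¹ •
        (vecMulVec (A *ᵥ u) (G *ᵥ u) + vecMulVec (G *ᵥ u) (A *ᵥ u)) +
      (((u ⬝ᵥ G *ᵥ u) / (u ⬝ᵥ A *ᵥ u) + 1) / (u ⬝ᵥ A *ᵥ u)) • vecMulVec (A *ᵥ u) (A *ᵥ u) := by
  rw [dfpUpdate, mul_vecMulVec_mul_of_isSymm _ hG, mul_vecMulVec_mul_of_isSymm _ hA,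
    mul_vecMulVec_mul_of_isSymm _ hA]

theorem bfgsUpdate_eq_vecMulVec (hA : A.IsSymm) (hG : G.IsSymm) :
    bfgsUpdate A G u = G - (u ⬝ᵥ G *ᵥ u)⁻¹ • vecMulVec (G *ᵥ u) (G *ᵥ u) +
      (u ⬝ᵥ A *ᵥ u)⁻¹ • vecMulVec (A *ᵥ u) (A *ᵥ u) := by
  rw [bfgsUpdate, mul_vecMulVec_mul_of_isSymm _ hG, mul_vecMulVec_mul_of_isSymm _ hA]

theorem dfpUpdate_eq_conjTranspose_mul_mul_add [DecidableEq ι] (hA : A.IsSymm) (hG : G.IsSymm) :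
    dfpUpdate A G u =
      (1 - (u ⬝ᵥ A *ᵥ u)⁻¹ • vecMulVec u (A *ᵥ u))ᴴ * G *
          (1 - (u ⬝ᵥ A *ᵥ u)⁻¹ • vecMulVec u (A *ᵥ u)) +
        (u ⬝ᵥ A *ᵥ u)⁻¹ • vecMulVec (A *ᵥ u) (A *ᵥ u) := by
  rw [conjTranspose_one_sub_smul_vecMulVec, dfpUpdate_eq_vecMulVec hA hG]
  simp only [sub_mul, mul_sub, one_mul, mul_one, smul_mul_assoc, mul_smul_comm, mul_vecMulVec,
    vecMulVec_mul, ← mulVec_transpose, hG.eq, vecMulVec_mulVec', smul_vecMulVec,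
    dotProduct_comm (G *ᵥ u) u]
  module

theorem bfgsUpdate_eq_conjTranspose_mul_mul_add [DecidableEq ι] (hA : A.IsSymm) (hG : G.IsSymm) :
    bfgsUpdate A G u =
      (1 - (u ⬝ᵥ G *ᵥ u)⁻¹ • vecMulVec u (G *ᵥ u))ᴴ * G *
          (1 - (u ⬝ᵥ G *ᵥ u)⁻¹ • vecMulVec u (G *ᵥ u)) +
        (u ⬝ᵥ A *ᵥ u)⁻¹ • vecMulVec (A *ᵥ u) (A *ᵥ u) := by
  rw [conjTranspose_one_sub_smul_vecMulVec, bfgsUpdate_eq_vecMulVec hA hG]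
  simp only [sub_mul, mul_sub, one_mul, mul_one, smul_mul_assoc, mul_smul_comm, mul_vecMulVec,
    vecMulVec_mul, ← mulVec_transpose, hG.eq, vecMulVec_mulVec', smul_vecMulVec,
    dotProduct_comm (G *ᵥ u) u]
  have hg : (u ⬝ᵥ G *ᵥ u) * (u ⬝ᵥ G *ᵥ u)⁻¹ * (u ⬝ᵥ G *ᵥ u)⁻¹ = (u ⬝ᵥ G *ᵥ u)⁻¹ := by
    simpa using inv_mul_mul_self (u ⬝ᵥ G *ᵥ u)⁻¹
  linear_combination (norm := module) (-1 : ℝ) • hg • vecMulVec (G *ᵥ u) (G *ᵥ u)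

theorem Matrix.PosSemidef.inv_dotProduct_mulVec_smul_vecMulVec (hA : A.PosSemidef) :
    ((u ⬝ᵥ A *ᵥ u)⁻¹ • vecMulVec (A *ᵥ u) (A *ᵥ u)).PosSemidef := by
  have ha : 0 ≤ u ⬝ᵥ A *ᵥ u := by simpa using hA.dotProduct_mulVec_nonneg u
  simpa using (posSemidef_vecMulVec_self_star (A *ᵥ u)).smul (inv_nonneg.mpr ha)

theorem posSemidef_dfpUpdate (hA : A.PosSemidef) (hG : G.PosSemidef) :
    (dfpUpdate A G u).PosSemidef := by
  classical
  rw [dfpUpdate_eq_conjTranspose_mul_mul_add (isHermitian_iff_isSymm.mp hA.1)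
    (isHermitian_iff_isSymm.mp hG.1)]
  exact (hG.conjTranspose_mul_mul_same _).add hA.inv_dotProduct_mulVec_smul_vecMulVec

theorem posSemidef_bfgsUpdate (hA : A.PosSemidef) (hG : G.PosSemidef) :
    (bfgsUpdate A G u).PosSemidef := by
  classical
  rw [bfgsUpdate_eq_conjTranspose_mul_mul_add (isHermitian_iff_isSymm.mp hA.1)
    (isHermitian_iff_isSymm.mp hG.1)]
  exact (hG.conjTranspose_mul_mul_same _).add hA.inv_dotProduct_mulVec_smul_vecMulVec

variable [DecidableEq ι]

/-- The witness is `D⁻¹ v`, read off from `D⁻¹ = G⁻¹ - G⁻¹yyᵀG⁻¹ / q + uuᵀ / a` with `y = Au`. -/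
theorem exists_dfpUpdate_mulVec_eq {a g q : ℝ} (hA : A.IsSymm) (hG : G.PosDef)
    (ha : u ⬝ᵥ A *ᵥ u = a) (hg : u ⬝ᵥ G *ᵥ u = g) (hq : u ⬝ᵥ (A * G⁻¹ * A) *ᵥ u = q)
    (ha0 : a ≠ 0) (hq0 : q ≠ 0) :
    ∃ w, dfpUpdate A G u *ᵥ w = (G - A) *ᵥ u ∧
      w ⬝ᵥ (G - A) *ᵥ u = g / a * (g - a) - a / q * (a - q) := by
  refine ⟨(g / a) • u - (a / q) • G⁻¹ *ᵥ A *ᵥ u, ?_, ?_⟩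
  · rw [dfpUpdate_eq_vecMulVec hA (isHermitian_iff_isSymm.mp hG.1)]
    simp only [add_mulVec, sub_mulVec, smul_mulVec, vecMulVec_mulVec', mulVec_sub, mulVec_smul,
      hG.mulVec_inv_mulVec, hG.mulVec_dotProduct_inv_mulVec, ← hA.dotProduct_mul_mul_mulVec,
      dotProduct_comm _ u, ha, hg, hq]
    match_scalars <;> field_simp <;> ring
  · simp only [sub_mulVec, dotProduct_sub, sub_dotProduct, smul_dotProduct, smul_eq_mul,
      dotProduct_comm (G⁻¹ *ᵥ A *ᵥ u), hG.mulVec_dotProduct_inv_mulVec,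
      ← hA.dotProduct_mul_mul_mulVec, ha, hg, hq]
    ring

/-- The witness is `B⁻¹ v`, read off from `B⁻¹ = (1 - uyᵀ / a) G⁻¹ (1 - yuᵀ / a) + uuᵀ / a` with
`y = Au`. -/
theorem exists_bfgsUpdate_mulVec_eq {a g q : ℝ} (hA : A.IsSymm) (hG : G.PosDef)
    (ha : u ⬝ᵥ A *ᵥ u = a) (hg : u ⬝ᵥ G *ᵥ u = g) (hq : u ⬝ᵥ (A * G⁻¹ * A) *ᵥ u = q)
    (ha0 : a ≠ 0) (hg0 : g ≠ 0) :
    ∃ w, bfgsUpdate A G u *ᵥ w = (G - A) *ᵥ u ∧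
      w ⬝ᵥ (G - A) *ᵥ u = (g * (q + a) / (a * a) - 1) * (g - a) - g / a * (a - q) := by
  refine ⟨(g * (q + a) / (a * a) - 1) • u - (g / a) • G⁻¹ *ᵥ A *ᵥ u, ?_, ?_⟩
  · rw [bfgsUpdate_eq_vecMulVec hA (isHermitian_iff_isSymm.mp hG.1)]
    simp only [add_mulVec, sub_mulVec, smul_mulVec, vecMulVec_mulVec', mulVec_sub, mulVec_smul,
      hG.mulVec_inv_mulVec, hG.mulVec_dotProduct_inv_mulVec, ← hA.dotProduct_mul_mul_mulVec,
      dotProduct_comm _ u, ha, hg, hq]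
    match_scalars <;> field_simp <;> ring
  · simp only [sub_mulVec, dotProduct_sub, sub_dotProduct, smul_dotProduct, smul_eq_mul,
      dotProduct_comm (G⁻¹ *ᵥ A *ᵥ u), hG.mulVec_dotProduct_inv_mulVec,
      ← hA.dotProduct_mul_mul_mulVec, ha, hg, hq]
    ring

end BroydenFamily

theorem broyd_eq_convexComb {n : ℕ} {τ : ℝ} (hτ : τ ∈ Set.Icc (0 : ℝ) 1)
    {A G : Matrix (Fin n) (Fin n) ℝ} (hA : A.PosSemidef) (hG : G.PosSemidef)
    {u : Fin n → ℝ} (hu : u ≠ 0) :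
    ∃ φ ∈ Set.Icc (0 : ℝ) 1, broyd τ A G u = φ • dfpUpdate A G u + (1 - φ) • bfgsUpdate A G u := by
  have ha : 0 ≤ u ⬝ᵥ A *ᵥ u := by simpa using hA.dotProduct_mulVec_nonneg u
  have hg : 0 ≤ u ⬝ᵥ G *ᵥ u := by simpa using hG.dotProduct_mulVec_nonneg u
  have hq : 0 ≤ u ⬝ᵥ (A * G⁻¹ * A) *ᵥ u := by
    have := (hG.inv.conjTranspose_mul_mul_same A).dotProduct_mulVec_nonneg u
    rwa [hA.1.eq, star_trivial] at this
  have hs : 0 ≤ τ * ((u ⬝ᵥ A *ᵥ u) / (u ⬝ᵥ (A * G⁻¹ * A) *ᵥ u)) :=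
    mul_nonneg hτ.1 (div_nonneg ha hq)
  have hρ : 0 ≤ (1 - τ) * ((u ⬝ᵥ G *ᵥ u) / (u ⬝ᵥ A *ᵥ u)) :=
    mul_nonneg (sub_nonneg.2 hτ.2) (div_nonneg hg ha)
  refine ⟨_, ⟨div_nonneg hs (add_nonneg hs hρ),
    div_le_one_of_le₀ (le_add_of_nonneg_right hρ) (add_nonneg hs hρ)⟩, ?_⟩
  simp only [broyd, if_neg hu]
  rfl

theorem dfp_scalar_bound {a g q ξ : ℝ} (ha : 0 < a) (hξ : 0 < ξ) (hag : a ≤ ξ * g)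
    (hqg : a ^ 2 ≤ q * g) :
    g / a * (g - a) - a / q * (a - q) ≤ (1 + ξ) * g * ((q - 2 * a + g) / a) := by
  have hg : 0 < g := pos_of_mul_pos_right (ha.trans_le hag) hξ.le
  have hq : 0 < q := pos_of_mul_pos_left ((pow_pos ha 2).trans_le hqg) hg.le
  suffices g * q * (g - a) + a * a * q - a * a * a ≤ (1 + ξ) * g * q * (q - 2 * a + g) from
    calc g / a * (g - a) - a / q * (a - q)
        = (g * q * (g - a) + a * a * q - a * a * a) / (a * q) := by field_simp; ring
      _ ≤ (1 + ξ) * g * q * (q - 2 * a + g) / (a * q) := by gcongr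
      _ = (1 + ξ) * g * ((q - 2 * a + g) / a) := by field_simp
  rcases le_or_gt g ((1 + ξ) * a) with h | h
  · have h4 : a ≤ (1 + ξ) * q := by nlinarith
    nlinarith [mul_nonneg (mul_nonneg hξ.le hq.le) (sq_nonneg (g - a)),
      mul_nonneg (sub_nonneg.2 hqg) (sub_nonneg.2 h4)]
  · rcases le_or_gt 1 (2 * ξ) with hx | hx
    · have hc : 0 ≤ ξ * g * g - (2 * ξ + 1) * a * g - a * a + 2 * (1 + ξ) * a * a := by
        nlinarith [sq_nonneg (2 * ξ * g - (2 * ξ + 1) * a), mul_nonneg (mul_nonneg ha.le ha.le)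
          (by nlinarith : (0:ℝ) ≤ 4 * ξ ^ 2 - 1)]
      nlinarith [mul_nonneg (mul_nonneg (by linarith : (0:ℝ) ≤ 1 + ξ) (sq_nonneg q))
          (sub_nonneg.2 h.le),
        mul_nonneg hq.le hc, mul_nonneg ha.le (sq_nonneg ((1 + ξ) * q - a))]
    · have hg2 : 2 * a ≤ g := by nlinarith
      have hc2 : 0 ≤ ξ * g * g - (2 * ξ + 1) * a * g + 2 * a * a := by
        nlinarith [mul_nonneg (sub_nonneg.2 hag) (sub_nonneg.2 hg2)]
      have h3a : 3 * a ≤ (1 + ξ) * g := by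
        nlinarith [mul_nonneg hg.le (by linarith : (0:ℝ) ≤ 1 - 2 * ξ)]
      nlinarith [mul_nonneg (sub_nonneg.2 h3a) (sq_nonneg q), mul_nonneg hq.le hc2,
        mul_nonneg ha.le (by nlinarith [sq_nonneg (2 * q - a), sq_nonneg a] :
          (0:ℝ) ≤ 3 * q ^ 2 - 3 * a * q + a ^ 2)]

theorem bfgs_scalar_bound {a g q ξ : ℝ} (ha : 0 < a) (hξ : 0 < ξ) (hag : a ≤ ξ * g)
    (hqa : q ≤ ξ * a) (hqg : a ^ 2 ≤ q * g) :
    (g * (q + a) / (a * a) - 1) * (g - a) - g / a * (a - q) ≤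
      (1 + ξ) * g * ((q - 2 * a + g) / a) := by
  have hg : 0 < g := pos_of_mul_pos_right (ha.trans_le hag) hξ.le
  suffices g * g * q + a * g * g - 3 * a * a * g + a * a * a ≤
      (1 + ξ) * a * g * (q - 2 * a + g) from
    calc (g * (q + a) / (a * a) - 1) * (g - a) - g / a * (a - q)
        = (g * g * q + a * g * g - 3 * a * a * g + a * a * a) / (a * a) := by field_simp; ring
      _ ≤ (1 + ξ) * a * g * (q - 2 * a + g) / (a * a) := by gcongr
      _ = (1 + ξ) * g * ((q - 2 * a + g) / a) := by field_simp
  rcases le_or_gt g ((1 + ξ) * a) with h | h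
  · nlinarith [mul_nonneg (sub_nonneg.2 hqg) (sub_nonneg.2 h),
      mul_nonneg (mul_nonneg hξ.le ha.le) (sq_nonneg (g - a))]
  · have hext : a ≤ (ξ ^ 2 - ξ + 1) * g := by nlinarith [mul_nonneg (sq_nonneg (ξ - 1)) hg.le]
    nlinarith [mul_nonneg (mul_nonneg (sub_nonneg.2 hqa) hg.le) (sub_nonneg.2 h.le),
      mul_nonneg (mul_nonneg ha.le ha.le) (sub_nonneg.2 hext)]

theorem sq_nuMeas {n : ℕ} {A G : Matrix (Fin n) (Fin n) ℝ} (hA : A.PosSemidef) (hG : G.PosDef)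
    (u : Fin n → ℝ) :
    nuMeas A G u ^ 2 =
      (u ⬝ᵥ (A * G⁻¹ * A) *ᵥ u - 2 * (u ⬝ᵥ A *ᵥ u) + u ⬝ᵥ G *ᵥ u) / (u ⬝ᵥ A *ᵥ u) := by
  have hAs := isHermitian_iff_isSymm.mp hA.1
  have hGA := hG.1.sub hA.1
  have hnum := (hG.inv.posSemidef.conjTranspose_mul_mul_same (G - A)).dotProduct_mulVec_nonneg u
  rw [hGA.eq, star_trivial] at hnum
  have ha : 0 ≤ u ⬝ᵥ A *ᵥ u := by simpa using hA.dotProduct_mulVec_nonneg u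
  rw [nuMeas, Real.sq_sqrt (div_nonneg hnum ha),
    (isHermitian_iff_isSymm.mp hGA).dotProduct_mul_mul_mulVec]
  simp only [sub_mulVec, mulVec_sub, dotProduct_sub, sub_dotProduct,
    hG.mulVec_dotProduct_inv_mulVec, hG.inv_mulVec_mulVec, ← hAs.dotProduct_mul_mul_mulVec,
    dotProduct_comm (A *ᵥ u) u, dotProduct_comm (G *ᵥ u) u]
  ring

theorem nu_change_of_metric_general {n : ℕ}
    (A G : Matrix (Fin n) (Fin n) ℝ) (hA : A.PosDef) (hG : G.PosDef)
    (ξ : ℝ) (hξ : 0 < ξ) (hlow : psdLE (ξ⁻¹ • A) G)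
    (τ : ℝ) (hτ : τ ∈ Set.Icc (0 : ℝ) 1) (u : Fin n → ℝ) (hu : u ≠ 0) :
    nuMeas A G u ^ 2 ≥
      (1 / (1 + ξ)) *
        (u ⬝ᵥ ((G - A) * (broyd τ A G u)⁻¹ * (G - A)).mulVec u) /
          (u ⬝ᵥ G.mulVec u) := by
  have hAs := isHermitian_iff_isSymm.mp hA.1
  set a := u ⬝ᵥ A *ᵥ u
  set g := u ⬝ᵥ G *ᵥ u
  set q := u ⬝ᵥ (A * G⁻¹ * A) *ᵥ u with hq_def
  have ha : 0 < a := by simpa using hA.dotProduct_mulVec_pos hu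
  have hg : 0 < g := by simpa using hG.dotProduct_mulVec_pos hu
  have hag : a ≤ ξ * g := by
    have := dotProduct_mulVec_le_of_posSemidef_sub hlow u
    rwa [smul_mulVec, dotProduct_smul, smul_eq_mul, inv_mul_le_iff₀ hξ] at this
  have hqa : q ≤ ξ * a := dotProduct_mul_inv_mul_mulVec_le hA.posSemidef hG hξ hlow u
  have hqg : a ^ 2 ≤ q * g := by
    rw [hq_def, hAs.dotProduct_mul_mul_mulVec]
    exact hG.sq_dotProduct_le u (A *ᵥ u)
  have hq : 0 < q := pos_of_mul_pos_left ((pow_pos ha 2).trans_le hqg) hg.le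
  obtain ⟨φ, hφ, hbroyd⟩ := broyd_eq_convexComb hτ hA.posSemidef hG.posSemidef hu
  obtain ⟨wD, hwD, hwDv⟩ :=
    exists_dfpUpdate_mulVec_eq (a := a) (g := g) (q := q) hAs hG rfl rfl rfl ha.ne' hq.ne'
  obtain ⟨wB, hwB, hwBv⟩ :=
    exists_bfgsUpdate_mulVec_eq (a := a) (g := g) (q := q) hAs hG rfl rfl rfl ha.ne' hg.ne'
  have hconv := dotProduct_inv_mulVec_convexComb_le
    (posSemidef_dfpUpdate hA.posSemidef hG.posSemidef)
    (posSemidef_bfgsUpdate hA.posSemidef hG.posSemidef) hφ hwD hwB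
  rw [hwDv, hwBv, ← hbroyd] at hconv
  have hN : (G - A) *ᵥ u ⬝ᵥ (broyd τ A G u)⁻¹ *ᵥ (G - A) *ᵥ u ≤
      (1 + ξ) * g * ((q - 2 * a + g) / a) := by
    linarith [mul_le_mul_of_nonneg_left (dfp_scalar_bound ha hξ hag hqg) hφ.1,
      mul_le_mul_of_nonneg_left (bfgs_scalar_bound ha hξ hag hqa hqg) (sub_nonneg.mpr hφ.2)]
  rw [sq_nuMeas hA.posSemidef hG,
    (isHermitian_iff_isSymm.mp (hG.1.sub hA.1)).dotProduct_mul_mul_mulVec, ge_iff_le]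
  calc 1 / (1 + ξ) * _ / g ≤ 1 / (1 + ξ) * ((1 + ξ) * g * ((q - 2 * a + g) / a)) / g := by
        gcongr
    _ = (q - 2 * a + g) / a := by field_simp

theorem nu_change_of_metric {n : ℕ} (hn : 1 ≤ n)
    (A G : Matrix (Fin n) (Fin n) ℝ) (hA : A.PosDef) (hG : G.PosDef)
    (ξ : ℝ) (hξ : 0 < ξ) (hlow : psdLE (ξ⁻¹ • A) G)
    (τ : ℝ) (hτ : τ ∈ Set.Icc (0 : ℝ) 1) (u : Fin n → ℝ) (hu : u ≠ 0) :
    nuMeas A G u ^ 2 ≥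
      (1 / (1 + ξ)) *
        (u ⬝ᵥ ((G - A) * (broyd τ A G u)⁻¹ * (G - A)).mulVec u) /
          (u ⬝ᵥ G.mulVec u) :=
  nu_change_of_metric_general A G hA hG ξ hξ hlow τ hτ u hu
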